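/- For cos t, sin t ∈ (0,1) with cos²t + sin²t = 1, the algebra A_{cos t}^+ is isomorphic to the algebra with structural constants matrix [[1/2, 0, 0, 1],[0, −sin t/(2cos t), 1/2, 0]], via the basis change e_1* = (1/(4cos t))(e_1 + e_2), e_2* = (1/(2√(sin 2t)))(e_1 − e_2). -/

import Mathlib

/-- Multiplication on ℝ² determined by structural constants `c`. -/
def amul (c : Fin 2 → Fin 2 → Fin 2 → ℝ) (x y : Fin 2 → ℝ) : Fin 2 → ℝ :=
  fun k => ∑ i : Fin 2, ∑ j : Fin 2, x i * y j * c i j k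

/-- Structural constants of the algebra A_c^{(s)} of the rotational flow. -/
def cAc (c s : ℝ) : Fin 2 → Fin 2 → Fin 2 → ℝ :=
  ![![![c, s], ![c, -s]], ![![-s, c], ![s, c]]]

/-- Structural constants of 𝒜₂(1/2, 0, -s/(2c)), i.e. the structural constants matrix
[[1/2, 0, 0, 1], [0, -s/(2c), 1/2, 0]]. -/
noncomputable def cB (c s : ℝ) : Fin 2 → Fin 2 → Fin 2 → ℝ :=
  ![![![1/2, 0], ![0, -s/(2*c)]], ![![0, 1/2], ![1, 0]]]

/-!
`amul` is bilinear, so a linear map intertwines two structure-constant multiplications as soon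
as it does so on the standard basis. Sending `e₁, e₂` to `u = (1, 1) / (4c)` and `v = b (1, -1)`,
the products in `A_c⁺` are `u u = u / 2`, `u v = -(s / (2c)) v`, `v u = v / 2` and
`v v = 8 s c b² u`, which are the structure constants of `𝒜₂(1/2, 0, -s/(2c))` exactly when
`8 s c b² = 1`, i.e. for `b = 1 / (2 √(2 s c)) = 1 / (2 √(sin 2t))`.
-/

def amulBilin (c : Fin 2 → Fin 2 → Fin 2 → ℝ) :
    (Fin 2 → ℝ) →ₗ[ℝ] (Fin 2 → ℝ) →ₗ[ℝ] (Fin 2 → ℝ) :=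
  LinearMap.mk₂ ℝ (amul c)
    (fun _ _ _ => by ext; simp only [amul, Pi.add_apply, add_mul, Finset.sum_add_distrib])
    (fun _ _ _ => by ext; simp only [amul, Pi.smul_apply, smul_eq_mul, Finset.mul_sum, mul_assoc])
    (fun _ _ _ => by
      ext; simp only [amul, Pi.add_apply, mul_add, add_mul, Finset.sum_add_distrib])
    (fun _ _ _ => by
      ext; simp only [amul, Pi.smul_apply, smul_eq_mul, Finset.mul_sum, mul_assoc, mul_left_comm])

lemma amul_single_single (c : Fin 2 → Fin 2 → Fin 2 → ℝ) (i j : Fin 2) :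
    amul c (Pi.single i 1) (Pi.single j 1) = c i j := by
  funext k
  simp [amul, Pi.single_apply]

theorem map_amul_of_map_single {cA cB : Fin 2 → Fin 2 → Fin 2 → ℝ}
    (f : (Fin 2 → ℝ) →ₗ[ℝ] (Fin 2 → ℝ))
    (h : ∀ i j, f (cB i j) = amul cA (f (Pi.single i 1)) (f (Pi.single j 1))) (x y : Fin 2 → ℝ) :
    f (amul cB x y) = amul cA (f x) (f y) := by
  have hB : (amulBilin cB).compr₂ f = (amulBilin cA).compl₁₂ f f :=
    LinearMap.ext_basis (Pi.basisFun ℝ (Fin 2)) (Pi.basisFun ℝ (Fin 2)) fun i j => by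
      simpa [amulBilin, amul_single_single] using h i j
  exact LinearMap.congr_fun₂ hB x y

noncomputable def basisChange (c b : ℝ) : (Fin 2 → ℝ) →ₗ[ℝ] (Fin 2 → ℝ) :=
  Matrix.toLin' !![1 / (4 * c), b; 1 / (4 * c), -b]

lemma det_basisChange_ne_zero {c b : ℝ} (hc : c ≠ 0) (hb : b ≠ 0) :
    LinearMap.det (basisChange c b) ≠ 0 := by
  rw [basisChange, LinearMap.det_toLin', Matrix.det_fin_two_of]
  field_simp
  norm_num [hb, hc]

lemma basisChange_apply (c b : ℝ) (x : Fin 2 → ℝ) :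
    basisChange c b x = ![x 0 * (1 / (4 * c)) + x 1 * b, x 0 * (1 / (4 * c)) - x 1 * b] := by
  rw [basisChange, Matrix.toLin'_apply, Matrix.mulVec_eq_sum]
  ext k
  fin_cases k <;> simp [sub_eq_add_neg]

theorem basisChange_mul_basisChange (c s b : ℝ) (hc : c ≠ 0) (hb : 8 * s * c * b ^ 2 = 1)
    (i j : Fin 2) :
    basisChange c b (cB c s i j) =
      amul (cAc c s) (basisChange c b (Pi.single i 1)) (basisChange c b (Pi.single j 1)) := by
  funext k
  fin_cases i <;> fin_cases j <;> fin_cases k <;>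
    simp only [basisChange_apply, amul, cB, cAc, Fin.sum_univ_two, Fin.isValue, Fin.zero_eta,
      Fin.mk_one, Matrix.cons_val', Matrix.cons_val_zero, Matrix.cons_val_one,
      Matrix.cons_val_fin_one, Pi.single_eq_same, Pi.single_eq_of_ne, ne_eq, one_ne_zero,
      zero_ne_one, not_false_eq_true] <;> field_simp
  all_goals first | ring1 | linear_combination (-4 * c) * hb

theorem stmt_16_general (t : ℝ)
    (hc : Real.cos t ∈ Set.Ioo (0 : ℝ) 1) (hs : Real.sin t ∈ Set.Ioo (0 : ℝ) 1) :
    ∃ f : (Fin 2 → ℝ) ≃ₗ[ℝ] (Fin 2 → ℝ),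
      f ![1, 0] = ![1 / (4 * Real.cos t), 1 / (4 * Real.cos t)] ∧
      f ![0, 1] = ![1 / (2 * Real.sqrt (Real.sin (2 * t))),
                    -(1 / (2 * Real.sqrt (Real.sin (2 * t))))] ∧
      ∀ x y : Fin 2 → ℝ,
        f (amul (cB (Real.cos t) (Real.sin t)) x y) =
          amul (cAc (Real.cos t) (Real.sin t)) (f x) (f y) := by
  obtain ⟨hc0, -⟩ := hc
  obtain ⟨hs0, -⟩ := hs
  rw [Real.sin_two_mul]
  set b := 1 / (2 * √(2 * Real.sin t * Real.cos t))
  have hb : 8 * Real.sin t * Real.cos t * b ^ 2 = 1 := by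
    have hsc : 0 < 2 * Real.sin t * Real.cos t := by positivity
    rw [div_pow, mul_pow, Real.sq_sqrt hsc.le]
    field_simp
    ring
  have hb0 : b ≠ 0 := by rintro hb0; simp [hb0] at hb
  refine ⟨(basisChange _ b).equivOfDetNeZero (det_basisChange_ne_zero hc0.ne' hb0), ?_, ?_,
    map_amul_of_map_single _ (basisChange_mul_basisChange _ _ b hc0.ne' hb)⟩
  · simp [basisChange_apply]
  · simp [basisChange_apply]

/-- For cos t, sin t ∈ (0,1) with cos²t + sin²t = 1, the algebra A_{cos t}⁺ is isomorphic
to 𝒜₂(1/2, 0, -sin t/(2 cos t)) via the basis change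
e₁* = (1/(4 cos t))(e₁ + e₂), e₂* = (1/(2√(sin 2t)))(e₁ - e₂). -/
theorem stmt_16 (t : ℝ)
    (hc : Real.cos t ∈ Set.Ioo (0 : ℝ) 1) (hs : Real.sin t ∈ Set.Ioo (0 : ℝ) 1)
    (hpyth : Real.cos t ^ 2 + Real.sin t ^ 2 = 1) :
    ∃ f : (Fin 2 → ℝ) ≃ₗ[ℝ] (Fin 2 → ℝ),
      f ![1, 0] = ![1 / (4 * Real.cos t), 1 / (4 * Real.cos t)] ∧
      f ![0, 1] = ![1 / (2 * Real.sqrt (Real.sin (2 * t))),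
                    -(1 / (2 * Real.sqrt (Real.sin (2 * t))))] ∧
      ∀ x y : Fin 2 → ℝ,
        f (amul (cB (Real.cos t) (Real.sin t)) x y) =
          amul (cAc (Real.cos t) (Real.sin t)) (f x) (f y) :=
  stmt_16_general t hc hs
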